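/- arXiv:1103.2501 — 4 statements merged into one kernel-verified Lean document; each statement's English description precedes it below -/
import Mathlib

section
/- Let P1, P2 ≥ 0 and h1, h2 ∈ ℝ satisfy the individually very strong interference conditions h1^2 ≥ 1 + P1 + P2 and h2^2 ≥ 1 + P1 + P2. Then the Gaussian MAC region 𝒞(P1, P2; 1) is contained in the Gaussian MAC region 𝒞(h1^2·P1, h2^2·P2; 1 + P1 + P2); that is, every pair (R1, R2) with R1, R2 ≥ 0, R1 ≤ (1/2)·log(1 + P1), R2 ≤ (1/2)·log(1 + P2), and R1 + R2 ≤ (1/2)·log(1 + P1 + P2) also satisfies R1 ≤ (1/2)·log(1 + h1^2·P1/(1 + P1 + P2)), R2 ≤ (1/2)·log(1 + h2^2·P2/(1 + P1 + P2)), and R1 + R2 ≤ (1/2)·log(1 + (h1^2·P1 + h2^2·P2)/(1 + P1 + P2)). -/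
/-! Raising every normalised power `qᵢ / N` can only enlarge the region, since each constraint
is monotone in `∑_{i ∈ T} qᵢ / N`. Very strong interference says exactly that
`Pᵢ ≤ hᵢ² Pᵢ / (1 + P₁ + P₂)` for each user. -/

/-- The Gaussian MAC region for effective received powers `q` and noise power `N`:
all nonnegative rate tuples such that for every nonempty subset `T` of users,
`∑ i in T, R i ≤ (1/2) * log (1 + (∑ i in T, q i) / N)`. -/
def macRegion {ι : Type*} [Fintype ι] (q : ι → ℝ) (N : ℝ) : Set (ι → ℝ) :=
  {R | (∀ i, 0 ≤ R i) ∧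
    ∀ T : Finset ι, T.Nonempty →
      ∑ i ∈ T, R i ≤ (1 / 2) * Real.log (1 + (∑ i ∈ T, q i) / N)}

open Finset

theorem macRegion_subset_macRegion {ι : Type*} [Fintype ι] {q q' : ι → ℝ} {N N' : ℝ}
    (hq : ∀ i, 0 ≤ q i) (hN : 0 ≤ N) (h : ∀ i, q i / N ≤ q' i / N') :
    macRegion q N ⊆ macRegion q' N' := by
  rintro R ⟨hR_nonneg, hR_sum⟩
  refine ⟨hR_nonneg, fun T hT => (hR_sum T hT).trans ?_⟩
  have hsum : (∑ i ∈ T, q i) / N ≤ (∑ i ∈ T, q' i) / N' := by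
    simpa only [sum_div] using sum_le_sum fun i _ => h i
  have hpos : 0 < 1 + (∑ i ∈ T, q i) / N := by
    positivity [sum_nonneg fun i (_ : i ∈ T) => hq i]
  gcongr

theorem le_mul_div_of_le {P c N : ℝ} (hP : 0 ≤ P) (hN : 0 < N) (hc : N ≤ c) :
    P ≤ c * P / N := by
  rw [le_div_iff₀ hN, mul_comm]
  exact mul_le_mul_of_nonneg_right hc hP

/-- under individually very strong interference,
`𝒞(P1, P2; 1) ⊆ 𝒞(h1²P1, h2²P2; 1 + P1 + P2)`. -/
theorem stmt_0 (P1 P2 h1 h2 : ℝ) (hP1 : 0 ≤ P1) (hP2 : 0 ≤ P2)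
    (hh1 : 1 + P1 + P2 ≤ h1 ^ 2) (hh2 : 1 + P1 + P2 ≤ h2 ^ 2) :
    macRegion ![P1, P2] 1 ⊆ macRegion ![h1 ^ 2 * P1, h2 ^ 2 * P2] (1 + P1 + P2) := by
  have hN : 0 < 1 + P1 + P2 := by linarith
  refine macRegion_subset_macRegion (fun i => ?_) zero_le_one fun i => ?_
  · fin_cases i <;> simpa
  · fin_cases i
    · simpa using le_mul_div_of_le hP1 hN hh1
    · simpa using le_mul_div_of_le hP2 hN hh2
end

section
/- Let P1, P2 ≥ 0 and h1, h2 ∈ ℝ satisfy h1^2 ≥ 1 + P1 + P2 and h2^2 ≥ 1 + P1 + P2. Consider the outer-bound region 𝒪 ⊆ ℝ^4 consisting of all (R1, R2, R3, R4) with Ri ≥ 0 such that (R1, R2) ∈ 𝒞(P1, P2; 1), (R3, R4) ∈ 𝒞(P1, P2; 1), (R1, R2, R3) ∈ 𝒞(P1, P2, h1^2·P1; 1), (R1, R2, R4) ∈ 𝒞(P1, P2, h2^2·P2; 1), (R1, R3, R4) ∈ 𝒞(h1^2·P1, P1, P2; 1), and (R2, R3, R4) ∈ 𝒞(h2^2·P2,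 P1, P2; 1). Then 𝒪 equals the product region {(R1, R2, R3, R4) ∈ ℝ^4 : Ri ≥ 0, (R1, R2) ∈ 𝒞(P1, P2; 1), (R3, R4) ∈ 𝒞(P1, P2; 1)}; i.e., under individually very strong interference all six-user cross constraints are implied by the two interference-free pairwise MAC constraints. -/
/-! A user of own-link power `p` can join a Gaussian MAC at received power `s` without
tightening anything, as long as `s N ≥ p (N + ∑ q)`: then
`(1 + p/N) (1 + a/N) ≤ 1 + (s + a)/N` for every partial sum `a ≤ ∑ q` of the other users'
powers, so each new sum-rate constraint is implied by an old one plus the user's single-user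
bound. Very strong interference `h² ≥ 1 + P1 + P2` is exactly this condition for each of the
four three-user regions, read as an interference-free pair with one strong user added. -/

open Finset Real

section MacRegion

variable {ι κ : Type*} [Fintype ι] [Fintype κ] {q R : ι → ℝ} {N : ℝ}

theorem sum_le_of_mem_macRegion (hR : R ∈ macRegion q N) (T : Finset ι) :
    ∑ i ∈ T, R i ≤ 1 / 2 * log (1 + (∑ i ∈ T, q i) / N) := by
  rcases T.eq_empty_or_nonempty with rfl | hT
  · simp
  · exact hR.2 T hT

theorem le_of_mem_macRegion (hR : R ∈ macRegion q N) (i : ι) :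
    R i ≤ 1 / 2 * log (1 + q i / N) := by
  simpa using sum_le_of_mem_macRegion hR {i}

theorem comp_equiv_mem_macRegion (hR : R ∈ macRegion q N) (e : κ ≃ ι) :
    R ∘ e ∈ macRegion (q ∘ e) N := by
  refine ⟨fun i => hR.1 (e i), fun T hT => ?_⟩
  simpa only [Function.comp_apply, sum_map, Equiv.coe_toEmbedding]
    using hR.2 (T.map e.toEmbedding) hT.map

theorem option_elim_mem_macRegion (hN : 0 < N) (hR : R ∈ macRegion q N) (hq : ∀ i, 0 ≤ q i)
    {x p s : ℝ} (hx₀ : 0 ≤ x) (hx : x ≤ 1 / 2 * log (1 + p / N)) (hp : 0 ≤ p)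
    (hs : p * (N + ∑ i, q i) ≤ s * N) :
    (fun o : Option ι => o.elim x R) ∈ macRegion (fun o => o.elim s q) N := by
  classical
  refine ⟨fun o => o.rec hx₀ hR.1, fun T _ => ?_⟩
  by_cases hT : none ∈ T
  · rw [← insert_eq_of_mem hT, ← insertNone_eraseNone, sum_insertNone, sum_insertNone]
    set S := eraseNone T
    have hqS : 0 ≤ ∑ i ∈ S, q i := sum_nonneg fun i _ => hq i
    have hqS_le : ∑ i ∈ S, q i ≤ ∑ i, q i := sum_le_univ_sum_of_nonneg hq
    have key : (1 + p / N) * (1 + (∑ i ∈ S, q i) / N) ≤ 1 + (s + ∑ i ∈ S, q i) / N := by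
      rw [← sub_nonneg]
      have : p * (N + ∑ i ∈ S, q i) ≤ s * N := le_trans (by gcongr) hs
      field_simp
      nlinarith
    have hlog := log_le_log (by positivity) key
    rw [log_mul (by positivity) (by positivity)] at hlog
    simp only [Option.elim_none, Option.elim_some]
    linarith [sum_le_of_mem_macRegion hR S]
  · rw [← erase_eq_of_notMem hT, ← map_some_eraseNone, sum_map, sum_map]
    exact sum_le_of_mem_macRegion hR _

theorem insertNth_eq_option_elim_comp {α : Type*} {n : ℕ} (j : Fin (n + 1)) (x : α)
    (r : Fin n → α) :
    Fin.insertNth j x r = (fun o : Option (Fin n) => o.elim x r) ∘ finSuccEquiv' j := by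
  ext i
  induction i using Fin.succAboveCases j <;> simp

theorem insertNth_mem_macRegion {n : ℕ} {q R : Fin n → ℝ} (hN : 0 < N) (hR : R ∈ macRegion q N)
    (hq : ∀ i, 0 ≤ q i) (j : Fin (n + 1)) {x p s : ℝ} (hx₀ : 0 ≤ x)
    (hx : x ≤ 1 / 2 * log (1 + p / N)) (hp : 0 ≤ p) (hs : p * (N + ∑ i, q i) ≤ s * N) :
    Fin.insertNth j x R ∈ macRegion (Fin.insertNth j s q) N := by
  rw [insertNth_eq_option_elim_comp, insertNth_eq_option_elim_comp]
  exact comp_equiv_mem_macRegion (option_elim_mem_macRegion hN hR hq hx₀ hx hp hs) _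

end MacRegion

/-- under individually very strong interference, the outer-bound region
equals the product of the two interference-free MAC regions. -/
theorem stmt_1 (P1 P2 h1 h2 : ℝ) (hP1 : 0 ≤ P1) (hP2 : 0 ≤ P2)
    (hh1 : 1 + P1 + P2 ≤ h1 ^ 2) (hh2 : 1 + P1 + P2 ≤ h2 ^ 2) :
    {R : Fin 4 → ℝ | (∀ i, 0 ≤ R i) ∧
      ![R 0, R 1] ∈ macRegion ![P1, P2] 1 ∧
      ![R 2, R 3] ∈ macRegion ![P1, P2] 1 ∧
      ![R 0, R 1, R 2] ∈ macRegion ![P1, P2, h1 ^ 2 * P1] 1 ∧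
      ![R 0, R 1, R 3] ∈ macRegion ![P1, P2, h2 ^ 2 * P2] 1 ∧
      ![R 0, R 2, R 3] ∈ macRegion ![h1 ^ 2 * P1, P1, P2] 1 ∧
      ![R 1, R 2, R 3] ∈ macRegion ![h2 ^ 2 * P2, P1, P2] 1} =
    {R : Fin 4 → ℝ | (∀ i, 0 ≤ R i) ∧
      ![R 0, R 1] ∈ macRegion ![P1, P2] 1 ∧
      ![R 2, R 3] ∈ macRegion ![P1, P2] 1} := by
  have hq : ∀ i, 0 ≤ ![P1, P2] i := by simp [Fin.forall_fin_two, hP1, hP2]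
  have strong {P h : ℝ} (hP : 0 ≤ P) (hh : 1 + P1 + P2 ≤ h ^ 2) :
      P * (1 + ∑ i, ![P1, P2] i) ≤ h ^ 2 * P * 1 := by
    simp only [Fin.sum_univ_two, Matrix.cons_val_zero, Matrix.cons_val_one]
    nlinarith [mul_le_mul_of_nonneg_left hh hP]
  ext R
  refine ⟨fun h => ⟨h.1, h.2.1, h.2.2.1⟩, fun ⟨hR, h01, h23⟩ => ⟨hR, h01, h23, ?_, ?_, ?_, ?_⟩⟩
  · convert insertNth_mem_macRegion one_pos h01 hq 2 (hR 2) (le_of_mem_macRegion h23 0) hP1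
      (strong hP1 hh1) using 2 <;> ext i <;> fin_cases i <;> rfl
  · convert insertNth_mem_macRegion one_pos h01 hq 2 (hR 3) (le_of_mem_macRegion h23 1) hP2
      (strong hP2 hh2) using 2 <;> ext i <;> fin_cases i <;> rfl
  · convert insertNth_mem_macRegion one_pos h23 hq 0 (hR 0) (le_of_mem_macRegion h01 0) hP1
      (strong hP1 hh1) using 2 <;> ext i <;> fin_cases i <;> rfl
  · convert insertNth_mem_macRegion one_pos h23 hq 0 (hR 1) (le_of_mem_macRegion h01 1) hP2
      (strong hP2 hh2) using 2 <;> ext i <;> fin_cases i <;> rfl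
end

section
/- Let n ≥ 1, N > 0, and q1, …, qn ≥ 0. Define the successive-decoding rate point R by Rk = (1/2)·log(1 + qk/(N + ∑_{j<k} qj)) for k = 1, …, n. Then (R1, …, Rn) belongs to the Gaussian MAC region 𝒞(q1, …, qn; N), and R1 + ⋯ + Rn = (1/2)·log(1 + (q1 + ⋯ + qn)/N). -/
open Finset Real

noncomputable def gaussianCapacity (P N : ℝ) : ℝ := 1 / 2 * log (1 + P / N)

lemma gaussianCapacity_nonneg {P N : ℝ} (hP : 0 ≤ P) (hN : 0 ≤ N) :
    0 ≤ gaussianCapacity P N := by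
  unfold gaussianCapacity
  have : 0 ≤ P / N := div_nonneg hP hN
  have := Real.log_nonneg (by linarith : (1 : ℝ) ≤ 1 + P / N)
  positivity

lemma gaussianCapacity_anti_noise {P N₁ N₂ : ℝ} (hP : 0 ≤ P) (hN₁ : 0 < N₁) (hN : N₁ ≤ N₂) :
    gaussianCapacity P N₂ ≤ gaussianCapacity P N₁ := by
  unfold gaussianCapacity
  have : 0 < N₂ := hN₁.trans_le hN
  gcongr

lemma gaussianCapacity_add_noise_add {x s N : ℝ} (hx : 0 ≤ x) (hs : 0 ≤ s) (hN : 0 < N) :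
    gaussianCapacity x (N + s) + gaussianCapacity s N = gaussianCapacity (x + s) N := by
  unfold gaussianCapacity
  have hNs : 0 < N + s := by linarith
  have h₁ : 0 < 1 + x / (N + s) := by positivity
  have h₂ : 0 < 1 + s / N := by positivity
  rw [← mul_add, ← log_mul h₁.ne' h₂.ne']
  congr 2
  field_simp
  ring

section SuccessiveDecoding

variable {ι : Type*} [LinearOrder ι] {q : ι → ℝ} {N : ℝ}

theorem sum_gaussianCapacity_filter_lt (hq : ∀ i, 0 ≤ q i) (hN : 0 < N) (T : Finset ι) :
    ∑ i ∈ T, gaussianCapacity (q i) (N + ∑ j ∈ T with j < i, q j) =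
      gaussianCapacity (∑ i ∈ T, q i) N := by
  induction T using Finset.induction_on_max with
  | empty => simp [gaussianCapacity]
  | insert a s hlt ih =>
    have ha : a ∉ s := fun h => lt_irrefl a (hlt a h)
    have hbefore_a : {j ∈ insert a s | j < a} = s := by
      rw [filter_insert, if_neg (lt_irrefl a), filter_true_of_mem hlt]
    have hrest : ∑ i ∈ s, gaussianCapacity (q i) (N + ∑ j ∈ insert a s with j < i, q j) =
        ∑ i ∈ s, gaussianCapacity (q i) (N + ∑ j ∈ s with j < i, q j) :=
      sum_congr rfl fun i hi => by rw [filter_insert, if_neg (hlt i hi).not_gt]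
    rw [sum_insert ha, sum_insert ha, hbefore_a, hrest, ih,
      gaussianCapacity_add_noise_add (hq a) (sum_nonneg fun i _ => hq i) hN]


variable [LocallyFiniteOrderBot ι]

theorem sum_gaussianCapacity_Iio_le (hq : ∀ i, 0 ≤ q i) (hN : 0 < N) (T : Finset ι) :
    ∑ i ∈ T, gaussianCapacity (q i) (N + ∑ j ∈ Iio i, q j) ≤
      gaussianCapacity (∑ i ∈ T, q i) N := by
  rw [← sum_gaussianCapacity_filter_lt hq hN T]
  refine sum_le_sum fun i _ => gaussianCapacity_anti_noise (hq i)
    (add_pos_of_pos_of_nonneg hN (sum_nonneg fun j _ => hq j)) (add_le_add_right ?_ N)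
  exact sum_le_sum_of_subset_of_nonneg (fun j hj => mem_Iio.2 (mem_filter.1 hj).2)
    fun j _ _ => hq j

variable [Fintype ι]

theorem successiveDecoding_mem_macRegion (hq : ∀ i, 0 ≤ q i) (hN : 0 < N) :
    (fun k => gaussianCapacity (q k) (N + ∑ j ∈ Iio k, q j)) ∈ macRegion q N :=
  ⟨fun k => gaussianCapacity_nonneg (hq k)
    (add_pos_of_pos_of_nonneg hN (sum_nonneg fun j _ => hq j)).le,
    fun T _ => sum_gaussianCapacity_Iio_le hq hN T⟩

theorem sum_successiveDecoding (hq : ∀ i, 0 ≤ q i) (hN : 0 < N) :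
    ∑ k, gaussianCapacity (q k) (N + ∑ j ∈ Iio k, q j) = gaussianCapacity (∑ i, q i) N := by
  simpa only [filter_gt_eq_Iio] using sum_gaussianCapacity_filter_lt hq hN univ

end SuccessiveDecoding

theorem stmt_9_general (n : ℕ) (N : ℝ) (hN : 0 < N) (q : Fin n → ℝ)
    (hq : ∀ i, 0 ≤ q i) :
    (fun k : Fin n => (1 / 2) * Real.log (1 + q k / (N + ∑ j ∈ Finset.Iio k, q j))) ∈
      macRegion q N ∧
    ∑ k : Fin n, (1 / 2) * Real.log (1 + q k / (N + ∑ j ∈ Finset.Iio k, q j)) =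
      (1 / 2) * Real.log (1 + (∑ i : Fin n, q i) / N) :=
  ⟨successiveDecoding_mem_macRegion hq hN, sum_successiveDecoding hq hN⟩

/-- the successive-decoding rate point
`R k = (1/2) log (1 + q k / (N + ∑_{j < k} q j))` lies in the Gaussian MAC region, and
its sum rate equals `(1/2) log (1 + (∑ i, q i) / N)`. -/
theorem stmt_9 (n : ℕ) (hn : 1 ≤ n) (N : ℝ) (hN : 0 < N) (q : Fin n → ℝ)
    (hq : ∀ i, 0 ≤ q i) :
    (fun k : Fin n => (1 / 2) * Real.log (1 + q k / (N + ∑ j ∈ Finset.Iio k, q j))) ∈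
      macRegion q N ∧
    ∑ k : Fin n, (1 / 2) * Real.log (1 + q k / (N + ∑ j ∈ Finset.Iio k, q j)) =
      (1 / 2) * Real.log (1 + (∑ i : Fin n, q i) / N) :=
  stmt_9_general n N hN q hq
end

section
/- Let P1, P2 ≥ 0 and h1, h2 ∈ ℝ. Set INR = h1^2·P1 + h2^2·P2. Then for every ρ ∈ [−1, 1] and every η ∈ ℝ with 0 < η^2 ≤ 1 − ρ^2, setting A = P1·(η − ρ·h1)^2 + P2·(η − ρ·h2)^2 + P1·P2·(h1 − h2)^2, the genie-aided upper bound expression dominates the treating-interference-as-noise lower bound: log(1 + (P1 + P2)/(1 + INR)) ≤ log(1 + (1/η^2)·(INR + A/(1 − ρ^2 + INR))). Consequently the sum-capacity upper bound C̄_Σ = min over such (ρ, η) of the right-hand side is at least the lower bound C̲_Σ = log(1 + (P1 + P2)/(1 + INR)). -/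
/-!
Write `N` for the interference power and `s = 1 - ρ² + N`. Clearing denominators, the
genie-aided bound dominates the treating-interference-as-noise rate iff
`(P₁ + P₂) η² s ≤ (s N + A)(1 + N)`, and the difference of the two sides is the sum of
squares `P₁ (h₁ (1 + N) - ρ η)² + P₂ (h₂ (1 + N) - ρ η)² + (1 + N) P₁ P₂ (h₁ - h₂)²`,
by Lagrange's identity `P₁ P₂ (h₁ - h₂)² = (P₁ + P₂) N - (P₁ h₁ + P₂ h₂)²`.
-/

open Real

namespace GaussianIMAC

variable (P1 P2 h1 h2 : ℝ)

def interferencePower : ℝ := h1 ^ 2 * P1 + h2 ^ 2 * P2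

noncomputable def tinSumRate : ℝ := log (1 + (P1 + P2) / (1 + interferencePower P1 P2 h1 h2))

/-- The quantity `A` of the genie-aided bound. -/
def genieNumerator (ρ η : ℝ) : ℝ :=
  P1 * (η - ρ * h1) ^ 2 + P2 * (η - ρ * h2) ^ 2 + P1 * P2 * (h1 - h2) ^ 2

noncomputable def genieSumRateBound (ρ η : ℝ) : ℝ :=
  log (1 + (1 / η ^ 2) * (interferencePower P1 P2 h1 h2 +
    genieNumerator P1 P2 h1 h2 ρ η / (1 - ρ ^ 2 + interferencePower P1 P2 h1 h2)))

theorem genie_gap_eq_sum_sq (ρ η : ℝ) :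
    let N := interferencePower P1 P2 h1 h2
    let s := 1 - ρ ^ 2 + N
    (s * N + genieNumerator P1 P2 h1 h2 ρ η) * (1 + N) - (P1 + P2) * (η ^ 2 * s) =
      P1 * (h1 * (1 + N) - ρ * η) ^ 2 + P2 * (h2 * (1 + N) - ρ * η) ^ 2 +
        (1 + N) * P1 * P2 * (h1 - h2) ^ 2 := by
  simp only [interferencePower, genieNumerator]
  ring

variable {P1 P2}

theorem interferencePower_nonneg (hP1 : 0 ≤ P1) (hP2 : 0 ≤ P2) :
    0 ≤ interferencePower P1 P2 h1 h2 := by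
  unfold interferencePower
  positivity

theorem tinSumRate_le_genieSumRateBound (hP1 : 0 ≤ P1) (hP2 : 0 ≤ P2) {ρ η : ℝ}
    (hη : η ≠ 0) (hs : 0 < 1 - ρ ^ 2 + interferencePower P1 P2 h1 h2) :
    tinSumRate P1 P2 h1 h2 ≤ genieSumRateBound P1 P2 h1 h2 ρ η := by
  have hN := interferencePower_nonneg h1 h2 hP1 hP2
  set N := interferencePower P1 P2 h1 h2
  set s := 1 - ρ ^ 2 + N
  set A := genieNumerator P1 P2 h1 h2 ρ η
  have hgap : (P1 + P2) * (η ^ 2 * s) ≤ (s * N + A) * (1 + N) := by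
    have hid := genie_gap_eq_sum_sq P1 P2 h1 h2 ρ η
    have hsq : 0 ≤ P1 * (h1 * (1 + N) - ρ * η) ^ 2 + P2 * (h2 * (1 + N) - ρ * η) ^ 2 +
        (1 + N) * P1 * P2 * (h1 - h2) ^ 2 := by positivity
    linarith
  have hrate : (P1 + P2) / (1 + N) ≤ 1 / η ^ 2 * (N + A / s) := by
    rw [show 1 / η ^ 2 * (N + A / s) = (s * N + A) / (η ^ 2 * s) by field_simp,
      div_le_div_iff₀ (by positivity) (by positivity)]
    exact hgap
  exact log_le_log (by positivity) (by linarith)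

end GaussianIMAC

/-- the genie-aided upper-bound expression dominates the
treating-interference-as-noise lower bound for every admissible `(ρ, η)`, hence the
genie-aided sum-capacity upper bound is at least the lower bound. -/
theorem stmt_13 (P1 P2 h1 h2 : ℝ) (hP1 : 0 ≤ P1) (hP2 : 0 ≤ P2) :
    (∀ ρ η : ℝ, -1 ≤ ρ → ρ ≤ 1 → 0 < η ^ 2 → η ^ 2 ≤ 1 - ρ ^ 2 →
      Real.log (1 + (P1 + P2) / (1 + (h1 ^ 2 * P1 + h2 ^ 2 * P2))) ≤
      Real.log (1 + (1 / η ^ 2) * ((h1 ^ 2 * P1 + h2 ^ 2 * P2) +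
        (P1 * (η - ρ * h1) ^ 2 + P2 * (η - ρ * h2) ^ 2 + P1 * P2 * (h1 - h2) ^ 2) /
          (1 - ρ ^ 2 + (h1 ^ 2 * P1 + h2 ^ 2 * P2))))) ∧
    Real.log (1 + (P1 + P2) / (1 + (h1 ^ 2 * P1 + h2 ^ 2 * P2))) ≤
      sInf {x : ℝ | ∃ ρ η : ℝ, -1 ≤ ρ ∧ ρ ≤ 1 ∧ 0 < η ^ 2 ∧ η ^ 2 ≤ 1 - ρ ^ 2 ∧
        x = Real.log (1 + (1 / η ^ 2) * ((h1 ^ 2 * P1 + h2 ^ 2 * P2) +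
          (P1 * (η - ρ * h1) ^ 2 + P2 * (η - ρ * h2) ^ 2 + P1 * P2 * (h1 - h2) ^ 2) /
            (1 - ρ ^ 2 + (h1 ^ 2 * P1 + h2 ^ 2 * P2))))} := by
  have bound : ∀ ρ η : ℝ, 0 < η ^ 2 → η ^ 2 ≤ 1 - ρ ^ 2 →
      GaussianIMAC.tinSumRate P1 P2 h1 h2 ≤ GaussianIMAC.genieSumRateBound P1 P2 h1 h2 ρ η := by
    intro ρ η hη hρη
    refine GaussianIMAC.tinSumRate_le_genieSumRateBound h1 h2 hP1 hP2
      (by rintro rfl; simp at hη) ?_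
    linarith [GaussianIMAC.interferencePower_nonneg h1 h2 hP1 hP2]
  refine ⟨fun ρ η _ _ => bound ρ η,
    le_csInf ⟨_, 0, 1, by norm_num, by norm_num, by norm_num, by norm_num, rfl⟩ ?_⟩
  rintro x ⟨ρ, η, -, -, hη, hρη, rfl⟩
  exact bound ρ η hη hρη
end
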